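/- arXiv:1109.3378 — 3 statements merged into one kernel-verified Lean document; each statement's English description precedes it below -/
import Mathlib

section
/- Let N be the nondeterministic finitary closure operator on ℕ containing ⟨∅, ℕ⟩ and, for each i ∈ ℕ and each j > i, the pair ⟨{i}, {j}⟩. Then a set A ⊆ ℕ is N-closed if and only if A = {i : i ≥ k} for some k. In particular, there is no ⊆-minimal N-closed set. -/
def NClosed (N : Set (Finset ℕ × Set ℕ)) (A : Set ℕ) : Prop :=
  ∀ p ∈ N, ↑p.1 ⊆ A → (A ∩ p.2).Nonempty

theorem no_minimal_nclosed
    (N : Set (Finset ℕ × Set ℕ))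
    (hN : N = {(∅, Set.univ)} ∪ {p | ∃ i j : ℕ, i < j ∧ p = ({i}, {j})}) :
    (∀ A : Set ℕ, NClosed N A ↔ ∃ k : ℕ, A = {i | k ≤ i}) ∧
      ¬∃ A : Set ℕ, NClosed N A ∧ ∀ B : Set ℕ, NClosed N B → A ⊆ B := by
  subst hN
  have key : ∀ A : Set ℕ, NClosed ({(∅, Set.univ)} ∪ {p | ∃ i j : ℕ, i < j ∧ p = ({i}, {j})}) A ↔ ∃ k : ℕ, A = {i | k ≤ i} := by
    intro A
    constructor
    · intro h
      have hne : A.Nonempty := by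
        have := h (∅, Set.univ) (Or.inl rfl) (by simp)
        simpa using this
      refine ⟨sInf A, ?_⟩
      ext i
      simp only [Set.mem_setOf_eq]
      constructor
      · exact fun hi => Nat.sInf_le hi
      · intro hi
        rcases eq_or_lt_of_le hi with heq | hlt
        · rw [← heq]; exact Nat.sInf_mem hne
        · have := h ({sInf A}, {i}) (Or.inr ⟨sInf A, i, hlt, rfl⟩)
            (by simp [Nat.sInf_mem hne])
          rcases this with ⟨x, hxA, hx⟩
          simp only [Set.mem_singleton_iff] at hx
          rwa [← hx]
    · rintro ⟨k, rfl⟩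
      rintro p (hp | ⟨i, j, hij, rfl⟩) hsub
      · simp only [Set.mem_singleton_iff] at hp
        subst hp
        exact ⟨k, le_refl k, trivial⟩
      · simp only [Finset.coe_singleton, Set.singleton_subset_iff,
          Set.mem_setOf_eq] at hsub
        exact ⟨j, le_trans hsub hij.le, rfl⟩
  refine ⟨key, ?_⟩
  rintro ⟨A, hA, hmin⟩
  rcases (key A).1 hA with ⟨k, rfl⟩
  have hB : NClosed ({(∅, Set.univ)} ∪ {p | ∃ i j : ℕ, i < j ∧ p = ({i}, {j})}) {i | k + 1 ≤ i} := (key _).2 ⟨k + 1, rfl⟩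
  have := hmin _ hB (le_refl k)
  simp at this
end

section
/- Suppose φ is a property of subsets of ℕ of finite character that is 'continuous at ∅' in the sense that there exists c ∈ ℕ such that φ(A) holds for every A with A ∩ {0,…,c} = ∅. Then every set A ⊆ ℕ has a ⊆-maximal subset B satisfying φ, which can be taken of the form D ∪ (A \ {0,…,c}) where D ⊆ {0,…,c} ∩ A is a finite set of maximal cardinality with φ(D ∪ (A \ {0,…,c})). -/
def FiniteCharacter (φ : Set ℕ → Prop) : Prop :=
  φ ∅ ∧ ∀ A : Set ℕ, φ A ↔ ∀ F : Finset ℕ, ↑F ⊆ A → φ ↑F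

theorem sigma1_fcp (φ : Set ℕ → Prop) (hφ : FiniteCharacter φ)
    (c : ℕ) (hc : ∀ A : Set ℕ, A ∩ {n | n ≤ c} = ∅ → φ A) (A : Set ℕ) :
    ∃ D : Finset ℕ, ↑D ⊆ {n | n ≤ c} ∩ A ∧
      φ (↑D ∪ (A \ {n | n ≤ c})) ∧
      (∀ D' : Finset ℕ, ↑D' ⊆ {n | n ≤ c} ∩ A →
        φ (↑D' ∪ (A \ {n | n ≤ c})) → D'.card ≤ D.card) ∧
      (↑D ∪ (A \ {n | n ≤ c})) ⊆ A ∧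
      ∀ C : Set ℕ, (↑D ∪ (A \ {n | n ≤ c})) ⊆ C → C ⊆ A → φ C →
        C = ↑D ∪ (A \ {n | n ≤ c}) := by
  classical
  -- φ is downward closed
  have hdown : ∀ S T : Set ℕ, S ⊆ T → φ T → φ S := by
    intro S T hST hT
    rw [hφ.2 S]
    intro F hF
    exact (hφ.2 T).1 hT F (hF.trans hST)
  have hgood : ∀ D' : Finset ℕ, ↑D' ⊆ {n | n ≤ c} ∩ A →
      D' ∈ (Finset.range (c+1)).powerset := by
    intro D' h
    rw [Finset.mem_powerset]
    intro x hx
    have := (h hx).1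
    simpa [Nat.lt_succ_iff] using this
  set P : Finset ℕ → Prop := fun D =>
    ↑D ⊆ ({n | n ≤ c} ∩ A : Set ℕ) ∧ φ (↑D ∪ (A \ {n | n ≤ c}))
  set S : Finset (Finset ℕ) := (Finset.range (c+1)).powerset.filter P with hS
  have hne : S.Nonempty := by
    refine ⟨∅, ?_⟩
    simp only [hS, Finset.mem_filter, Finset.mem_powerset, P]
    refine ⟨Finset.empty_subset _, by simp, ?_⟩
    simp only [Finset.coe_empty, Set.empty_union]
    apply hc
    ext x; simp [Set.mem_diff]
  obtain ⟨D, hDS, hmax⟩ := S.exists_max_image Finset.card hne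
  simp only [hS, Finset.mem_filter, P] at hDS
  obtain ⟨_, hD1, hD2⟩ := hDS
  have hcard : ∀ D' : Finset ℕ, ↑D' ⊆ ({n | n ≤ c} ∩ A : Set ℕ) →
      φ (↑D' ∪ (A \ {n | n ≤ c})) → D'.card ≤ D.card := by
    intro D' h1 h2
    exact hmax D' (by simp only [hS, Finset.mem_filter, P]; exact ⟨hgood D' h1, h1, h2⟩)
  have hsub : (↑D ∪ (A \ {n | n ≤ c}) : Set ℕ) ⊆ A := by
    intro x hx
    rcases hx with hx | hx
    · exact (hD1 hx).2
    · exact hx.1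
  refine ⟨D, hD1, hD2, hcard, hsub, ?_⟩
  intro C hC1 hC2 hC3
  by_contra hne'
  have : ∃ x, x ∈ C ∧ x ∉ (↑D ∪ (A \ {n | n ≤ c}) : Set ℕ) := by
    by_contra h
    push_neg at h
    exact hne' (Set.Subset.antisymm h hC1)
  obtain ⟨x, hxC, hxn⟩ := this
  have hxA : x ∈ A := hC2 hxC
  have hxc : x ≤ c := by
    by_contra h
    exact hxn (Or.inr ⟨hxA, fun hx => h hx⟩)
  have hxD : x ∉ D := fun h => hxn (Or.inl h)
  have h1 : ↑(insert x D) ⊆ ({n | n ≤ c} ∩ A : Set ℕ) := by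
    intro y hy
    rcases Finset.mem_insert.1 (by exact_mod_cast hy) with rfl | hy'
    · exact ⟨hxc, hxA⟩
    · exact hD1 hy'
  have h2 : φ (↑(insert x D) ∪ (A \ {n | n ≤ c})) := by
    apply hdown _ C _ hC3
    intro y hy
    rcases hy with hy | hy
    · rcases Finset.mem_insert.1 (by exact_mod_cast hy) with rfl | hy'
      · exact hxC
      · exact hC1 (Or.inl hy')
    · exact hC1 (Or.inr hy)
  have := hcard _ h1 h2
  rw [Finset.card_insert_of_notMem hxD] at this
  omega
end

section
/- Let f : ℕ → ℕ be injective, let (pᵢ) enumerate the primes, and let D be the finitary closure operator consisting of all pairs ⟨{pᵢ^{n+1}}, pᵢ^{n+2}⟩, ⟨{pᵢ^{n+2}}, pᵢ^{n+1}⟩, and, when f(n) = i, ⟨{pᵢ^{n+1}}, 0⟩. If B is a maximal D-closed subset of ℕ with 0 ∉ B, then for all i: i ∈ range(f) if and only if pᵢ ∉ B. -/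
def DClosed (D : Set (Finset ℕ × ℕ)) (A : Set ℕ) : Prop :=
  ∀ p ∈ D, ↑p.1 ⊆ A → p.2 ∈ A

theorem qf_ce_reversal (f : ℕ → ℕ) (hf : Function.Injective f)
    (p : ℕ → ℕ) (hpmono : StrictMono p)
    (hprime : ∀ q : ℕ, q.Prime ↔ ∃ i, p i = q)
    (D : Set (Finset ℕ × ℕ))
    (hD : D = {d | ∃ i n : ℕ, d = ({p i ^ (n + 1)}, p i ^ (n + 2))} ∪
        {d | ∃ i n : ℕ, d = ({p i ^ (n + 2)}, p i ^ (n + 1))} ∪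
        {d | ∃ i n : ℕ, f n = i ∧ d = ({p i ^ (n + 1)}, 0)})
    (B : Set ℕ) (hBcl : DClosed D B) (hB0 : 0 ∉ B)
    (hBmax : ∀ H : Set ℕ, B ⊆ H → DClosed D H → 0 ∉ H → H = B) :
    ∀ i : ℕ, (∃ n, f n = i) ↔ p i ∉ B := by
  have hp : ∀ i, (p i).Prime := fun i => (hprime (p i)).2 ⟨i, rfl⟩
  have hpow : ∀ i j a b : ℕ, p i ^ (a + 1) = p j ^ (b + 1) → i = j ∧ a = b := by
    intro i j a b h
    have hdvd : p i ∣ p j ^ (b + 1) := h ▸ dvd_pow_self (p i) (Nat.succ_ne_zero a)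
    have hpq : p i = p j :=
      (Nat.prime_dvd_prime_iff_eq (hp i) (hp j)).1 ((hp i).dvd_of_dvd_pow hdvd)
    have hij : i = j := hpmono.injective hpq
    subst hij
    have := Nat.pow_right_injective (hp i).two_le (h)
    exact ⟨rfl, Nat.succ_injective this⟩
  have hmemD1 : ∀ i n : ℕ, ({p i ^ (n + 1)}, p i ^ (n + 2)) ∈ D := by
    intro i n; rw [hD]; exact Or.inl (Or.inl ⟨i, n, rfl⟩)
  have hmemD2 : ∀ i n : ℕ, ({p i ^ (n + 2)}, p i ^ (n + 1)) ∈ D := by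
    intro i n; rw [hD]; exact Or.inl (Or.inr ⟨i, n, rfl⟩)
  have hmemD3 : ∀ i n : ℕ, f n = i → (({p i ^ (n + 1)}, 0) : Finset ℕ × ℕ) ∈ D := by
    intro i n h; rw [hD]; exact Or.inr ⟨i, n, h, rfl⟩
  intro i
  constructor
  · rintro ⟨n, hn⟩ hpB
    have hpow_mem : ∀ k, p i ^ (k + 1) ∈ B := by
      intro k
      induction k with
      | zero => simpa using hpB
      | succ k ih =>
        have := hBcl _ (hmemD1 i k) (by simpa using ih)
        simpa using this
    have h0 : (0 : ℕ) ∈ B := hBcl _ (hmemD3 i n hn) (by simpa using hpow_mem n)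
    exact hB0 h0
  · intro hpB
    by_contra hnr
    push_neg at hnr
    set H : Set ℕ := B ∪ {x | ∃ k, x = p i ^ (k + 1)} with hHdef
    have hBH : B ⊆ H := Set.subset_union_left
    have h0H : (0 : ℕ) ∉ H := by
      rintro (h | ⟨k, hk⟩)
      · exact hB0 h
      · exact absurd hk.symm (pow_pos (hp i).pos _).ne'
    have hHcl : DClosed D H := by
      intro d hd hsub
      rw [hD] at hd
      rcases hd with (⟨j, m, rfl⟩ | ⟨j, m, rfl⟩) | ⟨j, m, hfm, rfl⟩
      · have hmem : p j ^ (m + 1) ∈ H := hsub (by simp)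
        rcases hmem with h | ⟨k, hk⟩
        · exact hBH (hBcl _ (hmemD1 j m) (by simpa using h))
        · obtain ⟨hij, hmk⟩ := hpow i j k m hk.symm
          subst hij; subst hmk
          exact Or.inr ⟨k + 1, rfl⟩
      · have hmem : p j ^ (m + 2) ∈ H := hsub (by simp)
        rcases hmem with h | ⟨k, hk⟩
        · exact hBH (hBcl _ (hmemD2 j m) (by simpa using h))
        · obtain ⟨hij, hmk⟩ := hpow i j k (m + 1) hk.symm
          subst hij
          have : m + 1 + 1 = k + 1 := by omega
          exact Or.inr ⟨m, rfl⟩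
      · have hmem : p j ^ (m + 1) ∈ H := hsub (by simp)
        rcases hmem with h | ⟨k, hk⟩
        · exact absurd (hBcl _ (hmemD3 j m hfm) (by simpa using h)) hB0
        · obtain ⟨hij, hmk⟩ := hpow i j k m hk.symm
          subst hij; subst hmk
          exact absurd hfm (hnr k)
    have hHB : H = B := hBmax H hBH hHcl h0H
    have : p i ∈ H := Or.inr ⟨0, (pow_one _).symm⟩
    rw [hHB] at this
    exact hpB this
end
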